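/- Under the bijection between P–1_n multichains of length k and shifted tableaux T of shape λ(P) with max(T) ≤ k (for P of length n starting with d), a multichain has only small intervals if and only if the corresponding shifted tableau is strictly increasing along rows and columns. -/

import Mathlib

open Finset

/-- The `x`-th step (1-indexed) of a binary path `P` of length `n`;
`true` denotes an upstep `u`, `false` a downstep `d`. -/
def stp (n : ℕ) (P : Fin n → Bool) (x : ℕ) : Bool :=
  if h : 1 ≤ x ∧ x ≤ n then P ⟨x - 1, by omega⟩ else true

/-- The height of the `x`-th lattice point of the path (the partial sum of `±1`'s). -/
def ht (n : ℕ) (P : Fin n → Bool) (x : ℕ) : ℤ :=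
  ∑ j ∈ Finset.Icc 1 x, (if stp n P j then (1 : ℤ) else -1)

/-- The order on binary paths: `P ≤ Q` iff every height of `P` is at most that of `Q`. -/
def pLE (n : ℕ) (P Q : Fin n → Bool) : Prop := ∀ x ≤ n, ht n P x ≤ ht n Q x

def pLT (n : ℕ) (P Q : Fin n → Bool) : Prop := pLE n P Q ∧ ¬ pLE n Q P

/-- `Q` covers `P` in the lattice of binary paths. -/
def covers (n : ℕ) (P Q : Fin n → Bool) : Prop :=
  pLT n P Q ∧ ∀ R, pLT n P R → ¬ pLT n R Q

/-- The `x`-th point of `P` is a valley: last point of a maximal run of downsteps. -/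
def valley (n : ℕ) (P : Fin n → Bool) (x : ℕ) : Prop :=
  1 ≤ x ∧ x ≤ n ∧ stp n P x = false ∧ (x = n ∨ stp n P (x + 1) = true)

/-- The maximum path `1_n = u^n`. -/
def pTop (n : ℕ) : Fin n → Bool := fun _ => true

/-- The minimum path `0_n = d^n`. -/
def pBot (n : ℕ) : Fin n → Bool := fun _ => false

/-- The set of positions of downsteps of `P`. -/
def dsteps (n : ℕ) (P : Fin n → Bool) : Finset (Fin n) :=
  Finset.univ.filter fun j => P j = false

/-- `m(P) = |P|_d`, the number of downsteps of `P`. -/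
def nd (n : ℕ) (P : Fin n → Bool) : ℕ := (dsteps n P).card

/-- The 0-indexed position of the `(i+1)`-st downstep of `P`. -/
def dpos (n : ℕ) (P : Fin n → Bool) (i : Fin (nd n P)) : ℕ :=
  (((dsteps n P).orderIsoOfFin rfl i : {x // x ∈ dsteps n P}) : Fin n)

/-- The part `λ_{i+1} = n − (i+1) − k_{i+1} + 1` of the strict partition `λ(P)`;
since `k_{i+1} = dpos i − i`, this equals `n − dpos i`. -/
def lam (n : ℕ) (P : Fin n → Bool) (i : Fin (nd n P)) : ℕ := n - dpos n P i

/-- The shifted diagram `F(P)` of shape `λ(P)`, as the set of (1-indexed) cells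
`(i, j)` with `i ∈ [m]`, `i ≤ j ≤ λ_i + i − 1`. -/
def F (n : ℕ) (P : Fin n → Bool) : Set (ℕ × ℕ) :=
  {c | ∃ i : Fin (nd n P),
    c.1 = (i : ℕ) + 1 ∧ (i : ℕ) + 1 ≤ c.2 ∧ c.2 ≤ lam n P i + (i : ℕ)}

/-- The `x`-coordinate `n + i − j` of the lattice point of cell `c = (i,j)`. -/
def cellX (n : ℕ) (c : ℕ × ℕ) : ℕ := n + c.1 - c.2

/-- The `y`-coordinate `n − i − j` of the lattice point of cell `c = (i,j)`. -/
def cellY (n : ℕ) (c : ℕ × ℕ) : ℤ := (n : ℤ) - c.1 - c.2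

/-- A shifted tableau of shape `λ(P)`: positive entries, weakly increasing along
rows and columns. -/
def isTab (n : ℕ) (P : Fin n → Bool) (T : {c : ℕ × ℕ // c ∈ F n P} → ℕ) : Prop :=
  (∀ c, 0 < T c) ∧
  (∀ c c' : {c : ℕ × ℕ // c ∈ F n P},
    c.1.1 = c'.1.1 → c.1.2 + 1 = c'.1.2 → T c ≤ T c') ∧
  (∀ c c' : {c : ℕ × ℕ // c ∈ F n P},
    c.1.1 + 1 = c'.1.1 → c.1.2 = c'.1.2 → T c ≤ T c')

/-- A shifted tableau is strictly increasing along rows and columns. -/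
def isStrictTab (n : ℕ) (P : Fin n → Bool)
    (T : {c : ℕ × ℕ // c ∈ F n P} → ℕ) : Prop :=
  (∀ c c' : {c : ℕ × ℕ // c ∈ F n P},
    c.1.1 = c'.1.1 → c.1.2 + 1 = c'.1.2 → T c < T c') ∧
  (∀ c c' : {c : ℕ × ℕ // c ∈ F n P},
    c.1.1 + 1 = c'.1.1 → c.1.2 = c'.1.2 → T c < T c')

/-- A multichain `P = P_0 ≤ P_1 ≤ ⋯ ≤ P_k = u^n`. -/
def isMultichain (n k : ℕ) (P : Fin n → Bool)
    (C : Fin (k + 1) → Fin n → Bool) : Prop :=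
  (∀ i : Fin k, pLE n (C i.castSucc) (C i.succ)) ∧ C 0 = P ∧ C (Fin.last k) = pTop n

/-- The defining relation of the bijection: the entry at cell `(i,j)` is `k − ξ`
for the unique `ξ` with `h_{n+i−j}(P_ξ) ≤ n − i − j < h_{n+i−j}(P_{ξ+1})`. -/
def corr (n k : ℕ) (P : Fin n → Bool) (C : Fin (k + 1) → Fin n → Bool)
    (T : {c : ℕ × ℕ // c ∈ F n P} → ℕ) : Prop :=
  ∀ (c : {c : ℕ × ℕ // c ∈ F n P}) (ξ : ℕ) (hξ : ξ < k),
    (T c = k - ξ ↔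
      (ht n (C ⟨ξ, by omega⟩) (cellX n c.1) ≤ cellY n c.1 ∧
       cellY n c.1 < ht n (C ⟨ξ + 1, by omega⟩) (cellX n c.1)))

/-- The interval `[P, Q]` is small: `Q = P` or `Q` is the join of a nonempty set of
elements covering `P` (joins being pointwise maxima of heights). -/
def small (n : ℕ) (P Q : Fin n → Bool) : Prop :=
  Q = P ∨ ∃ (S : Finset (Fin n → Bool)) (hS : S.Nonempty),
    (∀ R ∈ S, covers n P R) ∧ ∀ x ≤ n, ht n Q x = S.sup' hS fun R => ht n R x


/-!
The cell `(i, j)` of `F(P)` sits at the lattice point `(n + i - j, n - i - j)`, and the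
correspondence says exactly that `T` exceeds `k - ξ` at a cell iff its point lies strictly below
`P_ξ`. An interval `[A, B]` is small iff `B` is obtained from `A` by raising some valleys of `A`
by `2`. If all intervals are small, the point of a cell with entry `k - ξ` is a valley of `P_ξ`,
so `P_ξ` passes strictly above the points of the right and lower neighbouring cells, whose
entries are therefore larger. Conversely, if `P_{ξ+1}` rises above `P_ξ` at `x`, the point two
steps below `P_{ξ+1}` at `x` is a cell with entry `k - ξ`; strictness at its neighbouring cells
lifts `P_ξ` at `x ∓ 1`, which makes `x` a valley of `P_ξ`.
-/

theorem ht_zero (n : ℕ) (P : Fin n → Bool) : ht n P 0 = 0 := by simp [ht]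

theorem ht_succ (n : ℕ) (P : Fin n → Bool) (x : ℕ) :
    ht n P (x + 1) = ht n P x + if stp n P (x + 1) then 1 else -1 := by
  rw [ht, ht, ← Finset.sum_Icc_succ_top (by omega : 1 ≤ x + 1)]

theorem ht_succ_eq_add_one_iff (n : ℕ) (P : Fin n → Bool) (x : ℕ) :
    ht n P (x + 1) = ht n P x + 1 ↔ stp n P (x + 1) = true := by
  rw [ht_succ]; cases stp n P (x + 1) <;> simp

theorem ht_succ_eq_or (n : ℕ) (P : Fin n → Bool) (x : ℕ) :
    ht n P (x + 1) = ht n P x + 1 ∨ ht n P (x + 1) = ht n P x - 1 := by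
  rw [ht_succ]; cases stp n P (x + 1) <;> simp [sub_eq_add_neg]

theorem ht_emod_two (n : ℕ) (P : Fin n → Bool) (x : ℕ) : ht n P x % 2 = (x : ℤ) % 2 := by
  induction x with
  | zero => simp [ht_zero]
  | succ x ih => rcases ht_succ_eq_or n P x with h | h <;> rw [h] <;> omega

theorem ht_le (n : ℕ) (P : Fin n → Bool) (x : ℕ) : ht n P x ≤ x := by
  induction x with
  | zero => simp [ht_zero]
  | succ x ih => rcases ht_succ_eq_or n P x with h | h <;> rw [h] <;> omega

theorem stp_eq (n : ℕ) (P : Fin n → Bool) {x : ℕ} (h₁ : 1 ≤ x) (h₂ : x ≤ n) :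
    stp n P x = P ⟨x - 1, by omega⟩ := dif_pos ⟨h₁, h₂⟩

theorem pLE_antisymm {n : ℕ} {P Q : Fin n → Bool} (hPQ : pLE n P Q) (hQP : pLE n Q P) :
    P = Q := by
  funext j
  have hstep (R : Fin n → Bool) : stp n R (j + 1) = R j := stp_eq n R (by omega) j.2
  have h₀ := le_antisymm (hPQ j j.2.le) (hQP j j.2.le)
  have h₁ := le_antisymm (hPQ (j + 1) j.2) (hQP (j + 1) j.2)
  rw [ht_succ, ht_succ, hstep, hstep, h₀] at h₁
  cases hP : P j <;> cases hQ : Q j <;> simp [hP, hQ] at h₁ ⊢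

theorem valley_iff {n : ℕ} {P : Fin n → Bool} {x : ℕ} :
    valley n P x ↔ 1 ≤ x ∧ x ≤ n ∧ ht n P (x - 1) = ht n P x + 1 ∧
      (x < n → ht n P (x + 1) = ht n P x + 1) := by
  unfold valley
  refine and_congr_right fun hx => and_congr_right fun hxn => ?_
  obtain ⟨y, rfl⟩ : ∃ y, x = y + 1 := ⟨x - 1, by omega⟩
  rw [← ht_succ_eq_add_one_iff, Nat.add_sub_cancel]
  have := ht_succ_eq_or n P y
  have hdown : stp n P (y + 1) = false ↔ ht n P y = ht n P (y + 1) + 1 := by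
    rw [← Bool.not_eq_true, ← ht_succ_eq_add_one_iff]; omega
  rw [hdown]
  refine and_congr_right fun _ => ⟨?_, fun h => ?_⟩
  · rintro (h | h) hlt
    · omega
    · exact h
  · rcases Nat.lt_or_ge (y + 1) n with hlt | hge
    · exact Or.inr (h hlt)
    · exact Or.inl (by omega)

/-- Turn the valley `v` of `P` into a peak: steps `v` and `v + 1` become `u` and `d`. -/
def vflip (n v : ℕ) (P : Fin n → Bool) : Fin n → Bool := fun j =>
  if (j : ℕ) + 1 = v then true else if (j : ℕ) = v then false else P j

theorem stp_vflip (n v : ℕ) (P : Fin n → Bool) {t : ℕ} (h₁ : 1 ≤ t) (h₂ : t ≤ n) :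
    stp n (vflip n v P) t = if t = v then true else if t = v + 1 then false else stp n P t := by
  rw [stp_eq n _ h₁ h₂, stp_eq n P h₁ h₂]
  simp only [vflip]
  split_ifs <;> first | rfl | omega

theorem ht_vflip {n v : ℕ} {P : Fin n → Bool} (hv : valley n P v) {x : ℕ} (hx : x ≤ n) :
    ht n (vflip n v P) x = ht n P x + if x = v then 2 else 0 := by
  obtain ⟨hv₁, hvn, hvd, hvu⟩ := hv
  induction x with
  | zero => rw [if_neg (by omega), ht_zero, ht_zero, add_zero]
  | succ x ih =>
    rw [ht_succ, ht_succ, stp_vflip n v P (by omega) hx, ih (by omega)]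
    rcases eq_or_ne (x + 1) v with rfl | h₁
    · rw [hvd, if_neg (by omega), if_pos rfl, if_pos rfl, if_pos rfl, if_neg Bool.false_ne_true]
      ring
    rcases eq_or_ne x v with rfl | h₂
    · rw [hvu.resolve_left (by omega), if_pos rfl, if_neg h₁, if_neg h₁, if_pos rfl,
        if_pos rfl, if_neg Bool.false_ne_true]
      ring
    · simp only [if_neg h₁, if_neg h₂, if_neg (show x + 1 ≠ v + 1 by omega), add_zero]

theorem pLT_vflip {n v : ℕ} {P : Fin n → Bool} (hv : valley n P v) :
    pLT n P (vflip n v P) := by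
  refine ⟨fun x hx => ?_, fun h => ?_⟩
  · rw [ht_vflip hv hx]; split_ifs <;> omega
  · have := h v hv.2.1
    rw [ht_vflip hv hv.2.1, if_pos rfl] at this
    omega

theorem covers_vflip {n v : ℕ} {P : Fin n → Bool} (hv : valley n P v) :
    covers n P (vflip n v P) := by
  refine ⟨pLT_vflip hv, ?_⟩
  rintro R ⟨hPR, hRP⟩ ⟨hRF, hFR⟩
  have hRv := ht_emod_two n R v
  have hPv := ht_emod_two n P v
  have hPRv := hPR v hv.2.1
  have hRFv := hRF v hv.2.1
  rw [ht_vflip hv hv.2.1, if_pos rfl] at hRFv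
  -- away from `v` the heights of `R` are squeezed between those of `P` and `vflip n v P`
  have hoff : ∀ x ≤ n, x ≠ v → ht n R x = ht n P x := fun x hx hxv => by
    have := hRF x hx
    rw [ht_vflip hv hx, if_neg hxv, add_zero] at this
    exact le_antisymm this (hPR x hx)
  rcases (by omega : ht n R v = ht n P v ∨ ht n R v = ht n P v + 2) with h | h
  · refine hRP fun x hx => ?_
    rcases eq_or_ne x v with rfl | hxv
    · exact h.le
    · exact (hoff x hx hxv).le
  · refine hFR fun x hx => ?_
    rw [ht_vflip hv hx]
    rcases eq_or_ne x v with rfl | hxv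
    · rw [if_pos rfl, h]
    · rw [if_neg hxv, add_zero, hoff x hx hxv]

theorem exists_valley_vflip_le {n : ℕ} {P R : Fin n → Bool} (h : pLT n P R) :
    ∃ v, valley n P v ∧ pLE n (vflip n v P) R := by
  classical
  obtain ⟨hPR, hRP⟩ := h
  set D := (Finset.range (n + 1)).filter fun x => ht n P x < ht n R x
  have hD : D.Nonempty := by
    by_contra hD
    refine hRP fun x hx => not_lt.mp fun hlt => hD ⟨x, ?_⟩
    simp [D, hx, hlt]
  -- a lowest point of `P` strictly below `R` is a valley of `P`
  obtain ⟨v, hvD, hmin⟩ := D.exists_min_image (ht n P) hD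
  simp only [D, Finset.mem_filter, Finset.mem_range] at hvD hmin
  have hvn : v ≤ n := by omega
  have hgap : ht n P v + 2 ≤ ht n R v := by
    have := ht_emod_two n P v; have := ht_emod_two n R v; omega
  have hv₁ : 1 ≤ v := by
    by_contra h0
    obtain rfl : v = 0 := by omega
    simp [ht_zero] at hvD
  have hv : valley n P v := by
    refine valley_iff.mpr ⟨hv₁, hvn, ?_, fun hlt => ?_⟩
    · have hP := ht_succ_eq_or n P (v - 1)
      have hR := ht_succ_eq_or n R (v - 1)
      rw [Nat.sub_add_cancel hv₁] at hP hR
      by_contra hne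
      have := hmin (v - 1) ⟨by omega, by omega⟩
      omega
    · have hP := ht_succ_eq_or n P v
      have hR := ht_succ_eq_or n R v
      by_contra hne
      have := hmin (v + 1) ⟨by omega, by omega⟩
      omega
  refine ⟨v, hv, fun x hx => ?_⟩
  rw [ht_vflip hv hx]
  rcases eq_or_ne x v with rfl | hxv
  · rwa [if_pos rfl]
  · rw [if_neg hxv, add_zero]; exact hPR x hx

theorem eq_vflip_of_covers {n : ℕ} {P R : Fin n → Bool} (h : covers n P R) :
    ∃ v, valley n P v ∧ R = vflip n v P := by
  obtain ⟨v, hv, hle⟩ := exists_valley_vflip_le h.1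
  refine ⟨v, hv, pLE_antisymm ?_ hle⟩
  by_contra hRF
  exact h.2 _ (pLT_vflip hv) ⟨hle, hRF⟩

theorem small_iff_forall_ht {n : ℕ} {P Q : Fin n → Bool} :
    small n P Q ↔ ∀ x ≤ n, ht n Q x = ht n P x ∨ (ht n Q x = ht n P x + 2 ∧ valley n P x) := by
  classical
  constructor
  · rintro (rfl | ⟨S, hS, hcov, hsup⟩) x hx
    · exact Or.inl rfl
    obtain ⟨R, hR, hmax⟩ := S.exists_mem_eq_sup' hS fun R => ht n R x
    obtain ⟨v, hv, rfl⟩ := eq_vflip_of_covers (hcov R hR)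
    rw [hsup x hx, hmax, ht_vflip hv hx]
    rcases eq_or_ne x v with rfl | hxv
    · exact Or.inr ⟨by rw [if_pos rfl], hv⟩
    · exact Or.inl (by rw [if_neg hxv, add_zero])
  · intro h
    by_cases hQP : ∀ x ≤ n, ht n Q x = ht n P x
    · exact Or.inl (pLE_antisymm (fun x hx => (hQP x hx).le) fun x hx => (hQP x hx).ge)
    push Not at hQP
    obtain ⟨x₀, hx₀, hne⟩ := hQP
    -- `Q` is the join of the flips at the points where it lies above `P`
    set V := (Finset.range (n + 1)).filter fun x => ht n Q x = ht n P x + 2 ∧ valley n P x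
    have hV : ∀ v ∈ V, ht n Q v = ht n P v + 2 ∧ valley n P v := fun v hv =>
      (Finset.mem_filter.mp hv).2
    have hx₀V : x₀ ∈ V := by
      simp only [V, Finset.mem_filter, Finset.mem_range]
      exact ⟨by omega, (h x₀ hx₀).resolve_left hne⟩
    have hS : (V.image fun v => vflip n v P).Nonempty := ⟨_, Finset.mem_image_of_mem _ hx₀V⟩
    refine Or.inr ⟨_, hS, ?_, fun x hx => le_antisymm ?_ ?_⟩
    · simp only [Finset.mem_image]
      rintro R ⟨v, hv, rfl⟩
      exact covers_vflip (hV v hv).2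
    · by_cases hxV : x ∈ V
      · refine Finset.le_sup'_of_le _ (Finset.mem_image_of_mem _ hxV) ?_
        rw [ht_vflip (hV x hxV).2 hx, if_pos rfl, (hV x hxV).1]
      · have hQx : ht n Q x = ht n P x := (h x hx).resolve_right fun hx' =>
          hxV (Finset.mem_filter.mpr ⟨Finset.mem_range.mpr (by omega), hx'⟩)
        refine Finset.le_sup'_of_le _ (Finset.mem_image_of_mem _ hx₀V) ?_
        rw [ht_vflip (hV x₀ hx₀V).2 hx, hQx]
        split_ifs <;> omega
    · refine Finset.sup'_le _ _ ?_
      simp only [Finset.mem_image]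
      rintro R ⟨v, hv, rfl⟩
      rw [ht_vflip (hV v hv).2 hx]
      rcases eq_or_ne x v with rfl | hxv
      · rw [if_pos rfl, (hV x hv).1]
      · rw [if_neg hxv, add_zero]
        rcases h x hx with h' | h' <;> omega

theorem Finset.lt_card_filter_iff_orderEmbOfFin {α : Type*} [LinearOrder α] (s : Finset α)
    {p : α → Prop} [DecidablePred p] (hp : ∀ ⦃a b⦄, a ≤ b → p b → p a) (i : Fin s.card) :
    (i : ℕ) < (s.filter p).card ↔ p (s.orderEmbOfFin rfl i) := by
  set f := s.orderEmbOfFin rfl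
  have hcard : (s.filter p).card = (Finset.univ.filter fun j => p (f j)).card := by
    conv_lhs => rw [← s.image_orderEmbOfFin_univ rfl, Finset.filter_image,
      Finset.card_image_of_injective _ f.injective]
  rw [hcard]
  constructor
  · intro hi
    by_contra hpi
    have hsub : (Finset.univ.filter fun j => p (f j)) ⊆ Finset.Iio i := fun j hj => by
      simp only [Finset.mem_filter, Finset.mem_univ, true_and] at hj
      exact Finset.mem_Iio.mpr (lt_of_not_ge fun hij => hpi (hp (f.monotone hij) hj))
    have := Finset.card_le_card hsub
    rw [Fin.card_Iio] at this
    omega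
  · intro hpi
    have hsub : Finset.Iic i ⊆ Finset.univ.filter fun j => p (f j) := fun j hj => by
      simp only [Finset.mem_filter, Finset.mem_univ, true_and]
      exact hp (f.monotone (Finset.mem_Iic.mp hj)) hpi
    have := Finset.card_le_card hsub
    rw [Fin.card_Iic] at this
    omega

def dcnt (n : ℕ) (P : Fin n → Bool) (x : ℕ) : ℕ :=
  ((dsteps n P).filter fun j : Fin n => (j : ℕ) < x).card

theorem dcnt_le_nd (n : ℕ) (P : Fin n → Bool) (x : ℕ) : dcnt n P x ≤ nd n P :=
  Finset.card_filter_le _ _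

theorem lt_dcnt_iff (n : ℕ) (P : Fin n → Bool) (i : Fin (nd n P)) (x : ℕ) :
    (i : ℕ) < dcnt n P x ↔ dpos n P i < x :=
  (dsteps n P).lt_card_filter_iff_orderEmbOfFin (p := fun j : Fin n => (j : ℕ) < x)
    (fun _ _ hab hb => lt_of_le_of_lt (Fin.le_def.mp hab) hb) i

theorem dcnt_succ (n : ℕ) (P : Fin n → Bool) {x : ℕ} (hx : x < n) :
    dcnt n P (x + 1) = dcnt n P x + if P ⟨x, hx⟩ then 0 else 1 := by
  have hsplit : (dsteps n P).filter (fun j : Fin n => (j : ℕ) < x + 1) =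
      (dsteps n P).filter (fun j : Fin n => (j : ℕ) < x) ∪
        (dsteps n P).filter (fun j : Fin n => j = ⟨x, hx⟩) := by
    ext j
    simp only [Finset.mem_union, Finset.mem_filter, Fin.ext_iff, ← and_or_left,
      Nat.lt_succ_iff_lt_or_eq]
  rw [dcnt, dcnt, hsplit, Finset.card_union_of_disjoint, Finset.filter_eq']
  · cases h : P ⟨x, hx⟩ <;> simp [dsteps, h]
  · refine Finset.disjoint_filter.mpr fun j _ hj => ?_
    rw [Fin.ext_iff]; exact hj.ne

theorem ht_eq_sub_two_mul_dcnt (n : ℕ) (P : Fin n → Bool) {x : ℕ} (hx : x ≤ n) :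
    ht n P x = x - 2 * dcnt n P x := by
  induction x with
  | zero => simp [ht_zero, dcnt]
  | succ x ih =>
    rw [ht_succ, stp_eq n P (by omega) hx, ih (by omega), dcnt_succ n P (by omega)]
    cases h : P ⟨x, by omega⟩ <;>
      simp only [Nat.add_sub_cancel, h, Bool.false_eq_true, ↓reduceIte] <;> push_cast <;> ring

theorem dpos_lt (n : ℕ) (P : Fin n → Bool) (i : Fin (nd n P)) : dpos n P i < n :=
  Fin.is_lt _

theorem cell_coords {n : ℕ} {P : Fin n → Bool} {c : ℕ × ℕ} (hc : c ∈ F n P) :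
    1 ≤ c.1 ∧ c.1 ≤ c.2 ∧ (cellX n c : ℤ) = n + c.1 - c.2 ∧ cellY n c = n - c.1 - c.2 := by
  obtain ⟨i, h₁, h₂, h₃⟩ := hc
  have : lam n P i ≤ n := Nat.sub_le _ _
  unfold cellX cellY
  omega

theorem mem_F_iff {n : ℕ} {P : Fin n → Bool} {c : ℕ × ℕ} :
    c ∈ F n P ↔ 1 ≤ c.1 ∧ c.1 ≤ c.2 ∧ ht n P (cellX n c) ≤ cellY n c := by
  constructor
  · intro hc
    obtain ⟨hc₁, hc₂, hX, hY⟩ := cell_coords hc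
    obtain ⟨i, h₁, h₂, h₃⟩ := hc
    have hdpos := dpos_lt n P i
    have hlt := (lt_dcnt_iff n P i (cellX n c)).mpr (by unfold lam at h₃; omega)
    refine ⟨hc₁, hc₂, ?_⟩
    rw [ht_eq_sub_two_mul_dcnt n P (by omega), hY]
    omega
  · rintro ⟨hc₁, hc₂, hht⟩
    have hX : 1 ≤ cellX n c := by
      by_contra h0
      rw [show cellX n c = 0 by omega, ht_zero] at hht
      unfold cellX at h0; unfold cellY at hht
      omega
    have hX' : (cellX n c : ℤ) = n + c.1 - c.2 := by unfold cellX at hX ⊢; omega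
    rw [ht_eq_sub_two_mul_dcnt n P (by omega), cellY] at hht
    have hi : c.1 - 1 < nd n P := by have := dcnt_le_nd n P (cellX n c); omega
    have hdpos := (lt_dcnt_iff n P ⟨c.1 - 1, hi⟩ (cellX n c)).mp (by simp only; omega)
    refine ⟨⟨c.1 - 1, hi⟩, by simp only; omega, by simp only; omega, ?_⟩
    unfold lam
    simp only
    omega

theorem exists_cell {n : ℕ} {P : Fin n → Bool} {x : ℕ} {y : ℤ} (hxn : x ≤ n) (hy : y + 2 ≤ x)
    (hpar : y % 2 = x % 2) (hP : ht n P x ≤ y) :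
    ∃ c : {c : ℕ × ℕ // c ∈ F n P}, cellX n c.1 = x ∧ cellY n c.1 = y := by
  obtain ⟨i, hi⟩ : ∃ i : ℕ, (x : ℤ) - y = 2 * i := ⟨((x - y) / 2).toNat, by omega⟩
  have hX : cellX n (i, n + i - x) = x := by unfold cellX; omega
  have hY : cellY n (i, n + i - x) = y := by unfold cellY; omega
  refine ⟨⟨(i, n + i - x), mem_F_iff.mpr ⟨by simp only; omega, by simp only; omega, ?_⟩⟩, hX, hY⟩
  rwa [hX, hY]

theorem pLE_of_chain {n k : ℕ} {C : Fin (k + 1) → Fin n → Bool}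
    (hC : ∀ i : Fin k, pLE n (C i.castSucc) (C i.succ)) {ξ η : Fin (k + 1)} (h : ξ ≤ η) :
    pLE n (C ξ) (C η) := fun x hx =>
  (Fin.monotone_iff_le_succ (f := fun ξ => ht n (C ξ) x)).mpr (fun i => hC i x hx) h

/-- The entries of `T` exceeding `k - ξ` sit exactly at the cells whose lattice point lies
strictly below the path `C ξ`. -/
def Encodes (n k : ℕ) (P : Fin n → Bool) (C : Fin (k + 1) → Fin n → Bool)
    (T : {c : ℕ × ℕ // c ∈ F n P} → ℕ) : Prop :=
  ∀ c (ξ : Fin (k + 1)), k - ξ < T c ↔ cellY n c.1 < ht n (C ξ) (cellX n c.1)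

section Encodes

variable {n k : ℕ} {P : Fin n → Bool} {C : Fin (k + 1) → Fin n → Bool}
  {T : {c : ℕ × ℕ // c ∈ F n P} → ℕ}

theorem encodes_of_corr (hC : ∀ i : Fin k, pLE n (C i.castSucc) (C i.succ))
    (hpos : ∀ c, 0 < T c) (hle : ∀ c, T c ≤ k) (hco : corr n k P C T) : Encodes n k P C T := by
  intro c ξ
  have hTc := hpos c
  have hTk := hle c
  have hx : cellX n c.1 ≤ n := by have := cell_coords c.2; omega
  obtain ⟨hlo, hhi⟩ := (hco c (k - T c) (by omega)).mp (by omega)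
  constructor
  · intro h
    exact hhi.trans_le (pLE_of_chain hC (Fin.mk_le_of_le_val (by omega)) _ hx)
  · contrapose!
    intro h
    exact (pLE_of_chain hC (ξ := ξ) (η := ⟨k - T c, by omega⟩)
      (by show (ξ : ℕ) ≤ k - T c; omega) _ hx).trans hlo

theorem valley_at_cell (henc : Encodes n k P C T)
    (hsmall : ∀ i : Fin k, small n (C i.castSucc) (C i.succ)) (c : {c : ℕ × ℕ // c ∈ F n P})
    (ξ : Fin k) (hξ : T c = k - ξ) :
    ht n (C ξ.castSucc) (cellX n c.1) = cellY n c.1 ∧ valley n (C ξ.castSucc) (cellX n c.1) := by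
  have := cell_coords c.2
  have hlo := not_lt.mp ((henc c ξ.castSucc).not.mp (by simp [hξ]))
  have hhi := (henc c ξ.succ).mp (by rw [Fin.val_succ]; omega)
  have hpar := ht_emod_two n (C ξ.castSucc) (cellX n c.1)
  rcases (small_iff_forall_ht.mp (hsmall ξ)) (cellX n c.1) (by omega) with h | ⟨h, hv⟩
  · omega
  · exact ⟨by omega, hv⟩

theorem isStrictTab_of_small (henc : Encodes n k P C T) (hpos : ∀ c, 0 < T c)
    (hle : ∀ c, T c ≤ k) (hsmall : ∀ i : Fin k, small n (C i.castSucc) (C i.succ)) :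
    isStrictTab n P T := by
  suffices h : ∀ c c' : {c : ℕ × ℕ // c ∈ F n P}, cellY n c'.1 = cellY n c.1 - 1 →
      (cellX n c'.1 + 1 = cellX n c.1 ∨ cellX n c'.1 = cellX n c.1 + 1) → T c < T c' by
    refine ⟨fun c c' h₁ h₂ => h c c' ?_ ?_, fun c c' h₁ h₂ => h c c' ?_ ?_⟩ <;>
    · have := cell_coords c.2; have := cell_coords c'.2; omega
  intro c c' hy hx
  have hTc := hpos c
  have hTk := hle c
  set ξ : Fin k := ⟨k - T c, by omega⟩
  obtain ⟨hht, hv⟩ := valley_at_cell henc hsmall c ξ (by simp only [ξ]; omega)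
  obtain ⟨-, hxn, hpred, hsucc⟩ := valley_iff.mp hv
  have hx'n : cellX n c'.1 ≤ n := by have := cell_coords c'.2; omega
  have := (henc c' ξ.castSucc).mpr (by
    rcases hx with hx | hx
    · rw [← hx] at hpred hht
      rw [Nat.add_sub_cancel] at hpred
      omega
    · rw [hx] at hx'n ⊢
      have := hsucc (by omega)
      omega)
  simp only [Fin.val_castSucc, ξ] at this
  omega

theorem lt_ht_of_isStrictTab (henc : Encodes n k P C T) (hP : ∀ ξ, pLE n P (C ξ))
    (hstrict : isStrictTab n P T) {ξ : Fin (k + 1)} {c : {c : ℕ × ℕ // c ∈ F n P}}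
    (hc : k - ξ ≤ T c) {x : ℕ} (hx : x ≤ n) (hadj : x + 1 = cellX n c.1 ∨ x = cellX n c.1 + 1) :
    cellY n c.1 - 1 < ht n (C ξ) x := by
  by_contra hge
  have := cell_coords c.2
  have := ht_emod_two n (C ξ) x
  obtain ⟨c', hc'x, hc'y⟩ := exists_cell (P := P) (y := cellY n c.1 - 1) hx (by omega)
    (by omega) ((hP ξ x hx).trans (by omega))
  have := cell_coords c'.2
  have hlt : T c < T c' := by
    rcases hadj with hadj | hadj
    · exact hstrict.1 c c' (by omega) (by omega)
    · exact hstrict.2 c c' (by omega) (by omega)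
  have := (henc c' ξ).mp (by omega)
  rw [hc'x, hc'y] at this
  omega

theorem small_of_isStrictTab (henc : Encodes n k P C T)
    (hC : ∀ i : Fin k, pLE n (C i.castSucc) (C i.succ)) (hP : ∀ ξ, pLE n P (C ξ))
    (hstrict : isStrictTab n P T) (i : Fin k) : small n (C i.castSucc) (C i.succ) := by
  refine small_iff_forall_ht.mpr fun x hx => ?_
  have hAB := hC i x hx
  by_cases heq : ht n (C i.succ) x = ht n (C i.castSucc) x
  · exact Or.inl heq
  have hpA := ht_emod_two n (C i.castSucc) x
  have hpB := ht_emod_two n (C i.succ) x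
  have hBx := ht_le n (C i.succ) x
  have hx₁ : 1 ≤ x := by
    by_contra h0
    obtain rfl : x = 0 := by omega
    simp [ht_zero] at heq
  -- the point two steps below `C i.succ` at `x` is a cell with entry `k - i`
  obtain ⟨c, hcx, hcy⟩ := exists_cell (P := P) (y := ht n (C i.succ) x - 2) hx (by omega)
    (by omega) ((hP i.castSucc x hx).trans (by omega))
  have hTc := (henc c i.succ).mpr (by rw [hcx, hcy]; omega)
  rw [Fin.val_succ] at hTc
  have hpred := lt_ht_of_isStrictTab henc hP hstrict (ξ := i.castSucc) (c := c)
    (by rw [Fin.val_castSucc]; omega) (x := x - 1) (by omega) (Or.inl (by omega))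
  have hstep := ht_succ_eq_or n (C i.castSucc) (x - 1)
  have := ht_emod_two n (C i.castSucc) (x - 1)
  rw [Nat.sub_add_cancel hx₁] at hstep
  rw [hcy] at hpred
  refine Or.inr ⟨by omega, valley_iff.mpr ⟨hx₁, hx, by omega, fun hxn => ?_⟩⟩
  have hsucc := lt_ht_of_isStrictTab henc hP hstrict (ξ := i.castSucc) (c := c)
    (by rw [Fin.val_castSucc]; omega) (x := x + 1) hxn (Or.inr (by omega))
  have := ht_succ_eq_or n (C i.castSucc) x
  have := ht_emod_two n (C i.castSucc) (x + 1)
  rw [hcy] at hsucc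
  omega

end Encodes

theorem stmt17_general (n k : ℕ) (P : Fin n → Bool)
    (C : Fin (k + 1) → Fin n → Bool) (hC : isMultichain n k P C)
    (T : {c : ℕ × ℕ // c ∈ F n P} → ℕ) (hT : isTab n P T ∧ ∀ c, T c ≤ k)
    (hco : corr n k P C T) :
    (∀ i : Fin k, small n (C i.castSucc) (C i.succ)) ↔ isStrictTab n P T := by
  obtain ⟨hchain, rfl, -⟩ := hC
  have henc := encodes_of_corr hchain hT.1.1 hT.2 hco
  exact ⟨isStrictTab_of_small henc hT.1.1 hT.2,
    fun hstrict => small_of_isStrictTab henc hchain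
      (fun ξ => pLE_of_chain hchain (Fin.zero_le ξ)) hstrict⟩

/-- Under the multichain–tableau correspondence, a multichain has only small
intervals iff the tableau is strictly increasing along rows and columns. -/
theorem stmt17 (n k : ℕ) (P : Fin n → Bool) (hn : 0 < n)
    (hd : stp n P 1 = false) (hk : 0 < k)
    (C : Fin (k + 1) → Fin n → Bool) (hC : isMultichain n k P C)
    (T : {c : ℕ × ℕ // c ∈ F n P} → ℕ) (hT : isTab n P T ∧ ∀ c, T c ≤ k)
    (hco : corr n k P C T) :
    (∀ i : Fin k, small n (C i.castSucc) (C i.succ)) ↔ isStrictTab n P T :=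
  stmt17_general n k P C hC T hT hco
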